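/- The subdifferential ∂f of a proper closed convex function f: ℝⁿ → ℝ ∪ {+∞} is a maximal monotone operator. -/

import Mathlib

open Matrix Filter

/-- The convex subdifferential of `f : ℝⁿ → ℝ` at `x` (Euclidean inner product). -/
def subdiff {n : ℕ} (f : (Fin n → ℝ) → ℝ) (x : Fin n → ℝ) : Set (Fin n → ℝ) :=
  {g | ∀ y, f x + g ⬝ᵥ (y - x) ≤ f y}

/-- A set-valued operator `T` on `ℝⁿ` is monotone. -/
def MonotoneOp {n : ℕ} (T : (Fin n → ℝ) → Set (Fin n → ℝ)) : Prop :=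
  ∀ x y u v, u ∈ T x → v ∈ T y → 0 ≤ (u - v) ⬝ᵥ (x - y)

lemma dot_self_nonneg {n : ℕ} (v : Fin n → ℝ) : 0 ≤ v ⬝ᵥ v :=
  Finset.sum_nonneg fun i _ => mul_self_nonneg (v i)

lemma norm_sq_le_dot {n : ℕ} (z : Fin n → ℝ) : ‖z‖ ^ 2 ≤ z ⬝ᵥ z := by
  have h1 : ‖z‖ ≤ Real.sqrt (z ⬝ᵥ z) := by
    refine (pi_norm_le_iff_of_nonneg (Real.sqrt_nonneg _)).2 fun i => ?_
    rw [Real.norm_eq_abs]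
    refine Real.abs_le_sqrt ?_
    have : z i ^ 2 = z i * z i := sq (z i)
    rw [this]
    exact Finset.single_le_sum (f := fun j => z j * z j)
      (fun j _ => mul_self_nonneg (z j)) (Finset.mem_univ i)
  calc ‖z‖ ^ 2 ≤ Real.sqrt (z ⬝ᵥ z) ^ 2 := pow_le_pow_left₀ (norm_nonneg z) h1 2
    _ = z ⬝ᵥ z := Real.sq_sqrt (dot_self_nonneg z)

lemma dot_abs_le {n : ℕ} (w z : Fin n → ℝ) : |w ⬝ᵥ z| ≤ (n : ℝ) * ‖w‖ * ‖z‖ := by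
  calc |w ⬝ᵥ z| ≤ ∑ i, |w i * z i| := Finset.abs_sum_le_sum_abs _ _
    _ ≤ ∑ _i : Fin n, ‖w‖ * ‖z‖ := by
        refine Finset.sum_le_sum fun i _ => ?_
        rw [abs_mul]
        exact mul_le_mul (by simpa using norm_le_pi_norm w i)
          (by simpa using norm_le_pi_norm z i) (abs_nonneg _) (norm_nonneg _)
    _ = (n : ℝ) * ‖w‖ * ‖z‖ := by simp [mul_assoc]

/-- Resolvent surjectivity (Minty): for every `w` there is `z` with `w - z ∈ ∂f(z)`. -/
lemma exists_resolvent {n : ℕ} {f : (Fin n → ℝ) → ℝ}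
    (hconv : ConvexOn ℝ Set.univ f) (w : Fin n → ℝ) :
    ∃ z, w - z ∈ subdiff f z := by
  have hcont : Continuous f := by
    rw [← continuousOn_univ]
    exact hconv.continuousOn isOpen_univ
  set g : (Fin n → ℝ) → ℝ := fun z => f z + z ⬝ᵥ z / 2 - w ⬝ᵥ z with hg_def
  have hgcont : Continuous g := by
    have h1 : Continuous fun z : Fin n → ℝ => z ⬝ᵥ z := by unfold dotProduct; fun_prop
    have h2 : Continuous fun z : Fin n → ℝ => w ⬝ᵥ z := by unfold dotProduct; fun_prop
    continuity
  -- lower bound for f on the closed unit ball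
  obtain ⟨m, hm⟩ : ∃ m, ∀ u ∈ Metric.closedBall (0 : Fin n → ℝ) 1, m ≤ f u := by
    obtain ⟨u₀, -, hu₀⟩ := (isCompact_closedBall (0 : Fin n → ℝ) 1).exists_isMinOn
      ⟨0, Metric.mem_closedBall_self zero_le_one⟩ hcont.continuousOn
    exact ⟨f u₀, fun u hu => hu₀ hu⟩
  set C : ℝ := |m - f 0| with hC_def
  have hC0 : 0 ≤ C := abs_nonneg _
  -- linear lower bound on f outside the unit ball
  have hlin : ∀ z : Fin n → ℝ, 1 ≤ ‖z‖ → f 0 - C * ‖z‖ ≤ f z := by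
    intro z hz
    have hzpos : 0 < ‖z‖ := lt_of_lt_of_le one_pos hz
    set a : ℝ := ‖z‖⁻¹ with ha_def
    have ha0 : 0 < a := inv_pos.2 hzpos
    have ha1 : a ≤ 1 := by
      rw [ha_def]
      exact inv_le_one_of_one_le₀ hz
    have hmem : a • z ∈ Metric.closedBall (0 : Fin n → ℝ) 1 := by
      rw [Metric.mem_closedBall, dist_zero_right, norm_smul, Real.norm_eq_abs,
        abs_of_pos ha0]
      rw [ha_def, inv_mul_cancel₀ hzpos.ne']
    have hcv := hconv.2 (Set.mem_univ z) (Set.mem_univ (0 : Fin n → ℝ))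
      ha0.le (by linarith : (0:ℝ) ≤ 1 - a) (by ring)
    rw [smul_zero, add_zero] at hcv
    have h1 : m ≤ a * f z + (1 - a) * f 0 := le_trans (hm _ hmem) hcv
    have h2 : a * ‖z‖ = 1 := inv_mul_cancel₀ hzpos.ne'
    have h3 : -C ≤ m - f 0 := neg_abs_le _
    nlinarith [mul_le_mul_of_nonneg_right h1 hzpos.le]
  -- eventual bound: coercivity of g
  have hev : ∀ᶠ z in cocompact (Fin n → ℝ), g 0 ≤ g z := by
    have hR := tendsto_norm_cocompact_atTop (E := Fin n → ℝ)
    filter_upwards [hR.eventually_ge_atTop (max 1 (2 * (C + (n : ℝ) * ‖w‖)))] with z hz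
    have hz1 : 1 ≤ ‖z‖ := le_trans (le_max_left _ _) hz
    have hz2 : 2 * (C + (n : ℝ) * ‖w‖) ≤ ‖z‖ := le_trans (le_max_right _ _) hz
    have h1 := hlin z hz1
    have h2 := norm_sq_le_dot z
    have h3 := dot_abs_le w z
    have hg0 : g 0 = f 0 := by simp [hg_def]
    rw [hg0]
    have habs : -((n : ℝ) * ‖w‖ * ‖z‖) ≤ w ⬝ᵥ z ∧ w ⬝ᵥ z ≤ (n : ℝ) * ‖w‖ * ‖z‖ :=
      abs_le.mp h3
    simp only [hg_def]
    nlinarith [habs.2, sq_nonneg (‖z‖ - 2 * (C + (n : ℝ) * ‖w‖))]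
  obtain ⟨z, hz⟩ := hgcont.exists_forall_le' 0 hev
  refine ⟨z, fun y => ?_⟩
  set d : Fin n → ℝ := y - z with hd_def
  set Q : ℝ := d ⬝ᵥ d with hQ_def
  have hQ0 : 0 ≤ Q := dot_self_nonneg d
  have key : ∀ t : ℝ, 0 < t → t ≤ 1 →
      f z + (w - z) ⬝ᵥ d ≤ f y + t / 2 * Q := by
    intro t ht ht1
    have hpt : (1 - t) • z + t • y = z + t • d := by
      rw [hd_def]; module
    have hcv := hconv.2 (Set.mem_univ z) (Set.mem_univ y)
      (by linarith : (0:ℝ) ≤ 1 - t) ht.le (by ring)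
    rw [hpt] at hcv
    rw [smul_eq_mul, smul_eq_mul] at hcv
    have hmin := hz (z + t • d)
    have e1 : (z + t • d) ⬝ᵥ (z + t • d)
        = z ⬝ᵥ z + 2 * t * (z ⬝ᵥ d) + t ^ 2 * Q := by
      simp only [add_dotProduct, dotProduct_add, smul_dotProduct, dotProduct_smul,
        smul_eq_mul, hQ_def, dotProduct_comm d z]
      ring
    have e2 : w ⬝ᵥ (z + t • d) = w ⬝ᵥ z + t * (w ⬝ᵥ d) := by
      simp only [dotProduct_add, dotProduct_smul, smul_eq_mul]
    have e3 : (w - z) ⬝ᵥ d = w ⬝ᵥ d - z ⬝ᵥ d := sub_dotProduct ..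
    simp only [hg_def] at hmin
    rw [e1, e2] at hmin
    rw [e3]
    nlinarith [hmin, hcv, ht]
  by_contra hcon
  push_neg at hcon
  set ε : ℝ := f z + (w - z) ⬝ᵥ d - f y with hε_def
  have hε : 0 < ε := by linarith
  set t : ℝ := min 1 (ε / (Q + 1)) with ht_def
  have ht : 0 < t := lt_min one_pos (div_pos hε (by linarith))
  have ht1 : t ≤ 1 := min_le_left _ _
  have h4 : t * (Q + 1) ≤ ε := by
    have := min_le_right 1 (ε / (Q + 1))
    rw [← ht_def] at this
    exact (le_div_iff₀ (by linarith)).mp this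
  have h5 := key t ht ht1
  nlinarith [mul_nonneg ht.le hQ0]

/-- The subdifferential `∂f` of a proper closed convex function is a maximal
monotone operator: it is monotone, and any monotone operator whose graph contains the graph
of `∂f` equals `∂f`. -/
theorem stmt6 (n : ℕ) (f : (Fin n → ℝ) → ℝ)
    (hconv : ConvexOn ℝ Set.univ f) (hlsc : LowerSemicontinuous f) :
    MonotoneOp (subdiff f) ∧
      ∀ T : (Fin n → ℝ) → Set (Fin n → ℝ),
        MonotoneOp T → (∀ x, subdiff f x ⊆ T x) → T = subdiff f := by
  constructor
  · intro x y u v hu hv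
    have h1 := hu y
    have h2 := hv x
    have e1 : u ⬝ᵥ (y - x) = -(u ⬝ᵥ (x - y)) := by
      rw [show y - x = -(x - y) by abel, dotProduct_neg]
    rw [e1] at h1
    rw [sub_dotProduct]
    linarith
  · intro T hT hsub
    funext x
    apply Set.Subset.antisymm
    · intro u hu
      obtain ⟨z, hzsub⟩ := exists_resolvent hconv (x + u)
      have hzT : (x + u) - z ∈ T z := hsub z hzsub
      have hmono := hT x z u ((x + u) - z) hu hzT
      have e1 : u - ((x + u) - z) = -(x - z) := by abel
      rw [e1, neg_dotProduct] at hmono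
      have h0 : (x - z) ⬝ᵥ (x - z) = 0 :=
        le_antisymm (by linarith) (dot_self_nonneg _)
      have hxz : x - z = 0 := dotProduct_self_eq_zero.mp h0
      have hzx : z = x := (sub_eq_zero.mp hxz).symm
      rw [hzx] at hzsub
      simpa using hzsub
    · exact hsub x
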